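/- If the base order on X is well-founded, then the Dershowitz–Manna multiset ordering on finite multisets over X is well-founded. -/

import Mathlib

/-- The Dershowitz–Manna ordering on finite multisets over a partially ordered set. -/
def DMLT {X : Type*} [PartialOrder X] [DecidableEq X] (A B : Multiset X) : Prop :=
  ∃ C D : Multiset X, C ≠ 0 ∧ C ≤ B ∧ A = B - C + D ∧ ∀ d ∈ D, ∃ c ∈ C, d < c

theorem DMLT.isDershowitzMannaLT {X : Type*} [PartialOrder X] [DecidableEq X]
    {A B : Multiset X} (h : DMLT A B) : Multiset.IsDershowitzMannaLT A B := by
  obtain ⟨C, D, hC, hCB, rfl, hD⟩ := h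
  exact ⟨B - C, D, C, hC, rfl, (tsub_add_cancel_of_le hCB).symm, hD⟩

/-- If the base order is well-founded, so is the Dershowitz–Manna ordering. -/
theorem dmlt_wellFounded {X : Type*} [PartialOrder X] [DecidableEq X]
    (hwf : WellFounded ((· < ·) : X → X → Prop)) :
    WellFounded (DMLT (X := X)) :=
  haveI : WellFoundedLT X := ⟨hwf⟩
  Subrelation.wf DMLT.isDershowitzMannaLT Multiset.wellFounded_isDershowitzMannaLT
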